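/- The function F(c) = inf over positive integers t of (t!)^{1/t} · 15^{c/t} / c satisfies F(c) → log 15 as c → ∞ (where log denotes the natural logarithm). -/

import Mathlib

open Filter

noncomputable section

/-- An `n × n` 0-1 matrix `A` contains the `k × k` pattern `P` if there are strictly
increasing rows and columns selecting a submatrix that dominates `P`. -/
def Contains {k n : ℕ} (P : Matrix (Fin k) (Fin k) Bool)
    (A : Matrix (Fin n) (Fin n) Bool) : Prop :=
  ∃ r : Fin k → Fin n, ∃ c : Fin k → Fin n,
    StrictMono r ∧ StrictMono c ∧ ∀ i j, P i j = true → A (r i) (c j) = true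

/-- `A` avoids the pattern `P`. -/
def Avoids {k n : ℕ} (P : Matrix (Fin k) (Fin k) Bool)
    (A : Matrix (Fin n) (Fin n) Bool) : Prop := ¬ Contains P A

/-- The permutation matrix of a permutation. -/
def permMatrix {n : ℕ} (σ : Equiv.Perm (Fin n)) : Matrix (Fin n) (Fin n) Bool :=
  fun i j => decide (σ i = j)

/-- `A` is a permutation matrix. -/
def IsPermMatrix {n : ℕ} (A : Matrix (Fin n) (Fin n) Bool) : Prop :=
  ∃ σ : Equiv.Perm (Fin n), A = permMatrix σ

/-- Number of ones of a 0-1 matrix. -/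
def numOnes {m n : ℕ} (A : Matrix (Fin m) (Fin n) Bool) : ℕ :=
  (Finset.univ.filter fun p : Fin m × Fin n => A p.1 p.2 = true).card

/-- `SW P n = S_P(n)`, the number of `n × n` permutation matrices avoiding `P`. -/
def SW {k : ℕ} (P : Matrix (Fin k) (Fin k) Bool) (n : ℕ) : ℕ :=
  Nat.card {A : Matrix (Fin n) (Fin n) Bool // IsPermMatrix A ∧ Avoids P A}

/-- `exFH P n = ex(n, P)`, the maximum number of ones in an `n × n` 0-1 matrix
avoiding `P`. -/
def exFH {k : ℕ} (P : Matrix (Fin k) (Fin k) Bool) (n : ℕ) : ℕ :=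
  sSup {m : ℕ | ∃ A : Matrix (Fin n) (Fin n) Bool, Avoids P A ∧ numOnes A = m}

/-- `F c = inf over positive integers t of (t!)^(1/t) * 15^(c/t) / c`. -/
def F (c : ℝ) : ℝ :=
  ⨅ t : ℕ+, ((t : ℕ).factorial : ℝ) ^ ((1 : ℝ) / (t : ℕ)) * (15 : ℝ) ^ (c / (t : ℕ)) / c

/-- The block (among `n` consecutive blocks of length `t`) containing a given
index of `Fin (t * n)`. -/
def blockOf {t n : ℕ} (ht : 0 < t) (i : Fin (t * n)) : Fin n :=
  ⟨(i : ℕ) / t, by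
    rw [Nat.div_lt_iff_lt_mul ht]
    exact lt_of_lt_of_le i.isLt (le_of_eq (mul_comm t n))⟩

/-- The `t`-contraction of an `(t*n) × (t*n)` 0-1 matrix: entry `(a,b)` is 1 iff
the block `I_a × I_b` contains a one. -/
def contMat {t n : ℕ} (ht : 0 < t) (A : Matrix (Fin (t * n)) (Fin (t * n)) Bool) :
    Matrix (Fin n) (Fin n) Bool :=
  fun a b => @decide (∃ i j, blockOf ht i = a ∧ blockOf ht j = b ∧ A i j = true)
    (@Fintype.decidableExistsFintype _ _ (fun i => @Fintype.decidableExistsFintype _ _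
      (fun j => instDecidableAnd) _) _)

end

/-!
For a base `a > 1` put `x = c log a`; the `t`-th term is then `log a · (t!)^{1/t} e^{x/t} / x`.
The exponential series gives `x^t / t! ≤ e^x`, so every term is at least `log a`. Stirling's
bound `t! ≤ e t (t/e)^t` gives `(t!)^{1/t} / t → e⁻¹`, so the term with `t = ⌈x⌉` tends to
`log a · e⁻¹ · 1 · e = log a`.
-/

open Real Topology
open scoped Nat

lemma le_factorial_rpow_inv_mul_exp_div {x : ℝ} (hx : 0 ≤ x) {n : ℕ} (hn : n ≠ 0) :
    x ≤ (n ! : ℝ) ^ (n⁻¹ : ℝ) * exp (x / n) := by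
  rw [← pow_le_pow_iff_left₀ hx (by positivity) hn, mul_pow,
    rpow_inv_natCast_pow (by positivity) hn, ← exp_nat_mul,
    mul_div_cancel₀ _ (by exact_mod_cast hn), ← div_le_iff₀' (by positivity)]
  exact pow_div_factorial_le_exp x hx n

lemma factorial_le_exp_one_mul_self_mul_pow {n : ℕ} (hn : n ≠ 0) :
    (n ! : ℝ) ≤ exp 1 * n * (n / exp 1) ^ n := by
  obtain ⟨m, rfl⟩ := Nat.exists_eq_succ_of_ne_zero hn
  have h := Stirling.stirlingSeq'_antitone (Nat.zero_le m)
  simp only [Function.comp, Stirling.stirlingSeq_one] at h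
  rw [Stirling.stirlingSeq, div_le_iff₀ (by positivity)] at h
  have hsqrt : √(2 * (m.succ : ℝ)) = √2 * √(m.succ : ℝ) := sqrt_mul (by norm_num) _
  have hle : √(m.succ : ℝ) ≤ m.succ := Real.sqrt_le_self_iff.2 (Or.inr (by simp))
  calc (m.succ ! : ℝ) ≤ exp 1 / √2 * (√(2 * m.succ) * (m.succ / exp 1) ^ m.succ) := h
    _ = exp 1 * √(m.succ : ℝ) * (m.succ / exp 1) ^ m.succ := by
      rw [hsqrt]; field_simp
    _ ≤ exp 1 * m.succ * (m.succ / exp 1) ^ m.succ := by gcongr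

lemma factorial_rpow_inv_le {n : ℕ} (hn : n ≠ 0) :
    (n ! : ℝ) ^ (n⁻¹ : ℝ) ≤ (exp 1 * n) ^ (n⁻¹ : ℝ) * (n / exp 1) := by
  rw [← pow_le_pow_iff_left₀ (by positivity) (by positivity) hn, mul_pow,
    rpow_inv_natCast_pow (by positivity) hn, rpow_inv_natCast_pow (by positivity) hn]
  exact factorial_le_exp_one_mul_self_mul_pow hn

lemma tendsto_const_mul_self_rpow_inv {C : ℝ} (hC : 0 < C) :
    Tendsto (fun x : ℝ => (C * x) ^ x⁻¹) atTop (𝓝 1) := by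
  have hconst : Tendsto (fun x : ℝ => C ^ x⁻¹) atTop (𝓝 1) := by
    have h := ((continuous_const_rpow hC.ne').tendsto 0).comp tendsto_inv_atTop_zero
    rwa [rpow_zero] at h
  have hself : Tendsto (fun x : ℝ => x ^ x⁻¹) atTop (𝓝 1) := by
    simpa only [one_div] using tendsto_rpow_div
  refine (by simpa using hconst.mul hself : Tendsto _ _ _).congr' ?_
  filter_upwards [eventually_gt_atTop 0] with x hx
  rw [mul_rpow hC.le hx.le]

theorem tendsto_factorial_rpow_inv_div_self :
    Tendsto (fun n : ℕ => (n ! : ℝ) ^ (n⁻¹ : ℝ) / n) atTop (𝓝 (exp (-1))) := by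
  have hupper : Tendsto (fun n : ℕ => (exp 1 * n) ^ (n⁻¹ : ℝ) * exp (-1)) atTop
      (𝓝 (exp (-1))) := by
    simpa using ((tendsto_const_mul_self_rpow_inv (exp_pos 1)).comp
      tendsto_natCast_atTop_atTop).mul_const (exp (-1))
  refine tendsto_of_tendsto_of_tendsto_of_le_of_le' tendsto_const_nhds hupper ?_ ?_
  all_goals filter_upwards [eventually_ne_atTop 0] with n hn
  · have hn' : (0 : ℝ) < n := by positivity
    have h := le_factorial_rpow_inv_mul_exp_div hn'.le hn
    rw [div_self hn'.ne'] at h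
    rw [le_div_iff₀ hn', exp_neg, inv_mul_le_iff₀ (exp_pos 1)]
    linarith
  · have hn' : (0 : ℝ) < n := by positivity
    calc (n ! : ℝ) ^ (n⁻¹ : ℝ) / n ≤ (exp 1 * n) ^ (n⁻¹ : ℝ) * (n / exp 1) / n := by
          gcongr; exact factorial_rpow_inv_le hn
      _ = (exp 1 * n) ^ (n⁻¹ : ℝ) * exp (-1) := by
          rw [exp_neg]; field_simp

theorem tendsto_iInf_factorial_rpow_inv_mul_exp_div :
    Tendsto (fun x : ℝ => ⨅ t : ℕ+, ((t : ℕ)! : ℝ) ^ ((t : ℕ)⁻¹ : ℝ) * exp (x / t) / x)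
      atTop (𝓝 1) := by
  have hupper : Tendsto (fun x : ℝ => (⌈x⌉₊ ! : ℝ) ^ (⌈x⌉₊⁻¹ : ℝ) / ⌈x⌉₊ * (⌈x⌉₊ / x) *
      exp (x / ⌈x⌉₊)) atTop (𝓝 1) := by
    have hroot := tendsto_factorial_rpow_inv_div_self.comp (tendsto_nat_ceil_atTop (α := ℝ))
    have hratio : Tendsto (fun x : ℝ => (⌈x⌉₊ : ℝ) / x) atTop (𝓝 1) := tendsto_nat_ceil_div_atTop
    have hexp : Tendsto (fun x : ℝ => exp (x / ⌈x⌉₊)) atTop (𝓝 (exp 1)) := by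
      refine (continuous_exp.tendsto 1).comp ?_
      simpa using hratio.inv₀ one_ne_zero
    simpa [← exp_add] using (hroot.mul hratio).mul hexp
  refine tendsto_of_tendsto_of_tendsto_of_le_of_le' tendsto_const_nhds hupper ?_ ?_
  all_goals filter_upwards [eventually_gt_atTop 0] with x hx
  · exact le_ciInf fun t => (one_le_div hx).2 (le_factorial_rpow_inv_mul_exp_div hx.le t.ne_zero)
  · have hbdd : BddBelow (Set.range fun t : ℕ+ =>
        ((t : ℕ)! : ℝ) ^ ((t : ℕ)⁻¹ : ℝ) * exp (x / t) / x) :=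
      ⟨0, by rintro _ ⟨t, rfl⟩; positivity⟩
    refine (ciInf_le hbdd ⟨⌈x⌉₊, Nat.ceil_pos.2 hx⟩).trans_eq ?_
    simp only [PNat.mk_coe]
    field_simp

theorem tendsto_iInf_factorial_rpow_mul_rpow_div {a : ℝ} (ha : 1 < a) :
    Tendsto (fun c : ℝ => ⨅ t : ℕ+, ((t : ℕ)! : ℝ) ^ ((1 : ℝ) / (t : ℕ)) * a ^ (c / (t : ℕ)) / c)
      atTop (𝓝 (log a)) := by
  have hlog : 0 < log a := log_pos ha
  have hrescale : (fun c : ℝ => ⨅ t : ℕ+, ((t : ℕ)! : ℝ) ^ ((1 : ℝ) / (t : ℕ)) *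
      a ^ (c / (t : ℕ)) / c) = fun c => log a * ⨅ t : ℕ+, ((t : ℕ)! : ℝ) ^ ((t : ℕ)⁻¹ : ℝ) *
        exp (log a * c / t) / (log a * c) := by
    funext c
    rw [mul_iInf_of_nonneg hlog.le]
    congr 1; funext t
    rw [rpow_def_of_pos (zero_lt_one.trans ha) (c / _), one_div, mul_div_assoc',
      mul_div_assoc', mul_div_mul_left _ _ hlog.ne', mul_div_assoc]
  rw [hrescale]
  simpa using (tendsto_iInf_factorial_rpow_inv_mul_exp_div.comp
    (tendsto_id.const_mul_atTop hlog)).const_mul (log a)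

theorem F_tendsto_log_fifteen :
    Tendsto F atTop (nhds (Real.log 15)) :=
  tendsto_iInf_factorial_rpow_mul_rpow_div (by norm_num)
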